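/- arXiv:1511.05943 — 9 statements merged into one kernel-verified Lean document; each statement's English description precedes it below -/
import Mathlib

section
/- (Generalization, linear case) Let (x_i, y_i), i = 1,…,N, be a finite dataset with x_i ∈ E and y_i ∈ {−1,+1}, let w ∈ E and let ρ' > 0. If y_i ⟨Ψ x_i, Ψ w⟩ ≥ ρ' for all i, then y_i ⟨g x_i, Ψ w⟩ ≥ ρ' for all i and for every g ∈ G; that is, a separator of the averaged data with margin ρ' separates the entire G-transformed dataset with the same margin. -/
open MeasureTheory RealInnerProductSpace

/-!
Left invariance of `μ` makes `Ψ w` a fixed vector of every `g`, so the isometry `g` does not move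
`⟪·, Ψ w⟫`: `⟪g x, Ψ w⟫ = ⟪x, Ψ w⟫`. Averaging this identity over `g` gives
`⟪Ψ x, Ψ w⟫ = ⟪x, Ψ w⟫` as well, so the margin of `x` under every `g` equals that of `Ψ x`.
-/

section OrbitAverage

variable {E : Type*} [NormedAddCommGroup E] [InnerProductSpace ℝ E]
  {G : Type*} [Group G] [MeasurableSpace G]

theorem inner_map_eq_of_apply_eq (L : E ≃ₗᵢ[ℝ] E) {v : E} (hv : L v = v) (x : E) :
    ⟪L x, v⟫ = ⟪x, v⟫ := by
  conv_lhs => rw [← hv]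
  exact L.inner_map_map x v

theorem map_integral_orbit_eq_self [MeasurableMul G] (μ : Measure G) [μ.IsMulLeftInvariant]
    (ρ : G →* (E ≃ₗᵢ[ℝ] E)) (h : G) (ω : E) :
    ρ h (∫ g, ρ g ω ∂μ) = ∫ g, ρ g ω ∂μ := by
  calc ρ h (∫ g, ρ g ω ∂μ)
      = ∫ g, ρ h (ρ g ω) ∂μ :=
        ((ρ h).toContinuousLinearEquiv.integral_comp_comm (fun g => ρ g ω)).symm
    _ = ∫ g, ρ (h * g) ω ∂μ := by
        simp only [map_mul, LinearIsometryEquiv.coe_mul, Function.comp_apply]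
    _ = ∫ g, ρ g ω ∂μ := integral_mul_left_eq_self (fun g => ρ g ω) h

theorem inner_integral_orbit_eq_of_forall_apply_eq [CompleteSpace E] (μ : Measure G)
    [IsProbabilityMeasure μ] (ρ : G →* (E ≃ₗᵢ[ℝ] E)) {x v : E} (hx : Integrable (fun g => ρ g x) μ)
    (hv : ∀ g, ρ g v = v) :
    ⟪∫ g, ρ g x ∂μ, v⟫ = ⟪x, v⟫ := by
  calc ⟪∫ g, ρ g x ∂μ, v⟫
      = ∫ g, ⟪v, ρ g x⟫ ∂μ := by rw [real_inner_comm, integral_inner hx]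
    _ = ∫ _, ⟪x, v⟫ ∂μ := by
        congr 1 with g
        rw [real_inner_comm, inner_map_eq_of_apply_eq _ (hv g)]
    _ = ⟪x, v⟫ := by simp

end OrbitAverage

theorem generalization_linear_general
    {E : Type*} [NormedAddCommGroup E] [InnerProductSpace ℝ E] [FiniteDimensional ℝ E]
    {G : Type*} [Group G] [TopologicalSpace G] [IsTopologicalGroup G] [CompactSpace G]
    [MeasurableSpace G] [BorelSpace G]
    (μ : Measure G) [IsProbabilityMeasure μ] [μ.IsMulLeftInvariant]
    (ρ : G →* (E ≃ₗᵢ[ℝ] E)) (hρ : Continuous fun p : G × E => ρ p.1 p.2)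
    (Ψ : E → E) (hΨ : ∀ ω : E, Ψ ω = ∫ g, ρ g ω ∂μ)
    (N : ℕ) (x : Fin N → E) (y : Fin N → ℝ)
    (w : E) (ρ' : ℝ)
    (hsep : ∀ i, ρ' ≤ y i * ⟪Ψ (x i), Ψ w⟫) :
    ∀ (i : Fin N) (g : G), ρ' ≤ y i * ⟪ρ g (x i), Ψ w⟫ := by
  intro i g
  have hfixed : ∀ h, ρ h (Ψ w) = Ψ w := fun h => by
    rw [hΨ]
    exact map_integral_orbit_eq_self μ ρ h w
  have horbit : Integrable (fun h => ρ h (x i)) μ :=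
    (hρ.comp (Continuous.prodMk_left (x i))).integrable_of_hasCompactSupport
      (.of_compactSpace _)
  have hmargin : ⟪Ψ (x i), Ψ w⟫ = ⟪x i, Ψ w⟫ := by
    rw [hΨ (x i)]
    exact inner_integral_orbit_eq_of_forall_apply_eq μ ρ horbit hfixed
  rw [inner_map_eq_of_apply_eq (ρ g) (hfixed g), ← hmargin]
  exact hsep i

/-- Generalization, linear case: if `y i * ⟪Ψ xᵢ, Ψ w⟫ ≥ ρ'` for all `i`,
then `y i * ⟪g xᵢ, Ψ w⟫ ≥ ρ'` for all `i` and all `g ∈ G`: a separator of the averaged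
data with margin `ρ'` separates the entire `G`-transformed dataset with the same margin. -/
theorem generalization_linear
    {E : Type*} [NormedAddCommGroup E] [InnerProductSpace ℝ E] [FiniteDimensional ℝ E]
    {G : Type*} [Group G] [TopologicalSpace G] [IsTopologicalGroup G] [CompactSpace G]
    [MeasurableSpace G] [BorelSpace G]
    (μ : Measure G) [IsProbabilityMeasure μ] [μ.IsMulLeftInvariant] [μ.IsMulRightInvariant]
    [μ.IsInvInvariant]
    (ρ : G →* (E ≃ₗᵢ[ℝ] E)) (hρ : Continuous fun p : G × E => ρ p.1 p.2)
    (Ψ : E → E) (hΨ : ∀ ω : E, Ψ ω = ∫ g, ρ g ω ∂μ)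
    (N : ℕ) (x : Fin N → E) (y : Fin N → ℝ) (hy : ∀ i, y i = 1 ∨ y i = -1)
    (w : E) (ρ' : ℝ) (hρ' : 0 < ρ')
    (hsep : ∀ i, ρ' ≤ y i * ⟪Ψ (x i), Ψ w⟫) :
    ∀ (i : Fin N) (g : G), ρ' ≤ y i * ⟪ρ g (x i), Ψ w⟫ :=
  generalization_linear_general μ ρ hρ Ψ hΨ N x y w ρ' hsep
end

section
/- (Generalization in the RKHS) Assume the kernel k is unitary with respect to G. Let (x_i, y_i), i = 1,…,N, be a finite dataset with x_i ∈ E and y_i ∈ {−1,+1}, let ρ' > 0, and let w = Σ_{j=1}^N c_j Φ(x_j) for some coefficients c_j ∈ ℝ. If y_i ⟨Φ(x_i), w⟩ ≥ ρ' for all i, then y_i ⟨φ(g x_i), w⟩ ≥ ρ' for all i and for every g ∈ G; that is, w is a separator of the full G-transformed dataset in feature space with margin at least ρ'. -/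
open MeasureTheory RealInnerProductSpace

/-! By unitarity of the kernel and left invariance of Haar measure,
`⟪φ (g a), Φ z⟫ = ∫ ⟪φ a, φ (g⁻¹ h z)⟫ dμ(h) = ⟪φ a, Φ z⟫` does not depend on `g`;
averaging over `g` shows that it equals `⟪Φ a, Φ z⟫`. Hence `⟪φ (g xᵢ), w⟫ = ⟪Φ xᵢ, w⟫`
for every `w` in the span of the `Φ xⱼ`, so the margin of `Φ xᵢ` is also that of `φ (g xᵢ)`. -/

section OrbitAverage

variable {G E : Type*} [Group G] [SeminormedAddCommGroup E] [NormedSpace ℝ E]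
  (ρ : G →* (E ≃ₗᵢ[ℝ] E))

theorem integrable_orbit {F : Type*} [NormedAddCommGroup F] [TopologicalSpace G] [CompactSpace G]
    [MeasurableSpace G] [OpensMeasurableSpace G] (μ : Measure G) [IsFiniteMeasure μ]
    (hρ : Continuous fun p : G × E => ρ p.1 p.2) {f : E → F} (hf : Continuous f) (z : E) :
    Integrable (fun h => f (ρ h z)) μ :=
  (hf.comp (hρ.comp (Continuous.prodMk_left z))).integrable_of_hasCompactSupport
    (HasCompactSupport.of_compactSpace _)

variable {H : Type*} [NormedAddCommGroup H] [InnerProductSpace ℝ H] {φ : E → H}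

theorem inner_apply_apply_eq_inner_apply_inv_mul
    (hunitary : ∀ (g : G) (x y : E), ⟪φ (ρ g x), φ (ρ g y)⟫ = ⟪φ x, φ y⟫) (g h : G) (a z : E) :
    ⟪φ (ρ g a), φ (ρ h z)⟫ = ⟪φ a, φ (ρ (g⁻¹ * h) z)⟫ := by
  have hmul : ∀ (g h : G) (v : E), ρ g (ρ h v) = ρ (g * h) v := fun g h v => by simp
  rw [← hunitary g⁻¹, hmul, hmul, inv_mul_cancel, map_one]
  rfl

variable [CompleteSpace H] [MeasurableSpace G] [MeasurableMul G] (μ : Measure G)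
  [μ.IsMulLeftInvariant]

theorem inner_apply_integral_orbit_eq
    (hunitary : ∀ (g : G) (x y : E), ⟪φ (ρ g x), φ (ρ g y)⟫ = ⟪φ x, φ y⟫)
    {z : E} (hz : Integrable (fun h => φ (ρ h z)) μ) (g : G) (a : E) :
    ⟪φ (ρ g a), ∫ h, φ (ρ h z) ∂μ⟫ = ⟪φ a, ∫ h, φ (ρ h z) ∂μ⟫ := by
  simp only [← integral_inner hz, inner_apply_apply_eq_inner_apply_inv_mul ρ hunitary g]
  exact integral_mul_left_eq_self (fun h => ⟪φ a, φ (ρ h z)⟫) g⁻¹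

theorem inner_apply_integral_orbit_eq_inner_integral_orbit [IsProbabilityMeasure μ]
    (hunitary : ∀ (g : G) (x y : E), ⟪φ (ρ g x), φ (ρ g y)⟫ = ⟪φ x, φ y⟫)
    {a z : E} (ha : Integrable (fun h => φ (ρ h a)) μ) (hz : Integrable (fun h => φ (ρ h z)) μ)
    (g : G) :
    ⟪φ (ρ g a), ∫ h, φ (ρ h z) ∂μ⟫ = ⟪∫ h, φ (ρ h a) ∂μ, ∫ h, φ (ρ h z) ∂μ⟫ := by
  have hconst := inner_apply_integral_orbit_eq ρ μ hunitary hz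
  calc ⟪φ (ρ g a), ∫ h, φ (ρ h z) ∂μ⟫
      = ∫ _ : G, ⟪φ (ρ g a), ∫ h, φ (ρ h z) ∂μ⟫ ∂μ := by
        rw [integral_const, probReal_univ, one_smul]
    _ = ∫ g', ⟪φ (ρ g' a), ∫ h, φ (ρ h z) ∂μ⟫ ∂μ := by simp only [hconst]
    _ = ⟪∫ h, φ (ρ h a) ∂μ, ∫ h, φ (ρ h z) ∂μ⟫ := by
        rw [real_inner_comm, ← integral_inner ha]
        exact integral_congr_ae (.of_forall fun _ => real_inner_comm _ _)

end OrbitAverage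

theorem generalization_RKHS_general
    {E : Type*} [NormedAddCommGroup E] [InnerProductSpace ℝ E]
    {G : Type*} [Group G] [TopologicalSpace G] [IsTopologicalGroup G] [CompactSpace G]
    [MeasurableSpace G] [BorelSpace G]
    (μ : Measure G) [IsProbabilityMeasure μ] [μ.IsMulLeftInvariant]
    (ρ : G →* (E ≃ₗᵢ[ℝ] E)) (hρ : Continuous fun p : G × E => ρ p.1 p.2)
    {H : Type*} [NormedAddCommGroup H] [InnerProductSpace ℝ H] [CompleteSpace H]
    (φ : E → H) (hφ : Continuous φ)
    (hunitary : ∀ (g : G) (x y : E), ⟪φ (ρ g x), φ (ρ g y)⟫ = ⟪φ x, φ y⟫)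
    (Φ : E → H) (hΦ : ∀ x : E, Φ x = ∫ g, φ (ρ g x) ∂μ)
    (N : ℕ) (x : Fin N → E) (y : Fin N → ℝ)
    (c : Fin N → ℝ) (w : H) (hw : w = ∑ j, c j • Φ (x j))
    (ρ' : ℝ)
    (hsep : ∀ i, ρ' ≤ y i * ⟪Φ (x i), w⟫) :
    ∀ (i : Fin N) (g : G), ρ' ≤ y i * ⟪φ (ρ g (x i)), w⟫ := by
  have horbit := integrable_orbit ρ μ hρ hφ
  intro i g
  have hinner : ⟪φ (ρ g (x i)), w⟫ = ⟪Φ (x i), w⟫ := by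
    simp only [hw, inner_sum, real_inner_smul_right, hΦ,
      inner_apply_integral_orbit_eq_inner_integral_orbit ρ μ hunitary (horbit _) (horbit _)]
  exact hinner ▸ hsep i

/-- Generalization in the RKHS: for a unitary kernel, if
`w = Σ_j c_j Φ(x_j)` (with `Φ` the group-averaged feature map) separates the averaged
data with margin `ρ'`, i.e. `y i * ⟪Φ(xᵢ), w⟫ ≥ ρ'` for all `i`, then
`y i * ⟪φ(g xᵢ), w⟫ ≥ ρ'` for all `i` and all `g ∈ G`. -/
theorem generalization_RKHS
    {E : Type*} [NormedAddCommGroup E] [InnerProductSpace ℝ E] [FiniteDimensional ℝ E]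
    {G : Type*} [Group G] [TopologicalSpace G] [IsTopologicalGroup G] [CompactSpace G]
    [MeasurableSpace G] [BorelSpace G]
    (μ : Measure G) [IsProbabilityMeasure μ] [μ.IsMulLeftInvariant] [μ.IsMulRightInvariant]
    [μ.IsInvInvariant]
    (ρ : G →* (E ≃ₗᵢ[ℝ] E)) (hρ : Continuous fun p : G × E => ρ p.1 p.2)
    {H : Type*} [NormedAddCommGroup H] [InnerProductSpace ℝ H] [CompleteSpace H]
    (φ : E → H) (hφ : Continuous φ)
    (hunitary : ∀ (g : G) (x y : E), ⟪φ (ρ g x), φ (ρ g y)⟫ = ⟪φ x, φ y⟫)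
    (Φ : E → H) (hΦ : ∀ x : E, Φ x = ∫ g, φ (ρ g x) ∂μ)
    (N : ℕ) (x : Fin N → E) (y : Fin N → ℝ) (hy : ∀ i, y i = 1 ∨ y i = -1)
    (c : Fin N → ℝ) (w : H) (hw : w = ∑ j, c j • Φ (x j))
    (ρ' : ℝ) (hρ' : 0 < ρ')
    (hsep : ∀ i, ρ' ≤ y i * ⟪Φ (x i), w⟫) :
    ∀ (i : Fin N) (g : G), ρ' ≤ y i * ⟪φ (ρ g (x i)), w⟫ :=
  generalization_RKHS_general μ ρ hρ φ hφ hunitary Φ hΦ N x y c w hw ρ' hsep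
end

section
/- (Margin equality) Assume the kernel k is unitary with respect to G and let w = Σ_{j=1}^N c_j Φ(x_j) for points x_j ∈ E and coefficients c_j ∈ ℝ. Then for every x ∈ E and every g ∈ G, ⟨Φ(x), w⟩ = ⟨φ(g x), w⟩; consequently, for any labels y_i ∈ {−1,+1}, the minimum of y_i⟨Φ(x_i), w⟩ over i equals the minimum of y_i⟨φ(g x_i), w⟩ over all i and all g ∈ G. -/
/-!
Unitarity moves `g` across the inner product as `g⁻¹`, and left invariance of the Haar measure
absorbs it: `⟪φ (g • x), Φ v⟫ = ⟪φ x, Φ v⟫`. So pairing with any `w` in the span of the averaged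
features is constant along orbits; averaging over an orbit then leaves it unchanged, and every
inner infimum over `G` is an infimum of a constant.
-/

open MeasureTheory RealInnerProductSpace

section OrbitAverage

variable {G X H : Type*} [Group G] [MeasurableSpace G] [MulAction G X]
  [NormedAddCommGroup H] [InnerProductSpace ℝ H] [CompleteSpace H]

noncomputable def orbitAverage (μ : Measure G) (φ : X → H) (x : X) : H :=
  ∫ g, φ (g • x) ∂μ

variable {μ : Measure G} {φ : X → H}

theorem inner_orbitAverage_left_of_forall_inner_smul_eq [IsProbabilityMeasure μ] {x : X}
    (hx : Integrable (fun g => φ (g • x)) μ) {u : H} (hu : ∀ g : G, ⟪φ (g • x), u⟫ = ⟪φ x, u⟫) :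
    ⟪orbitAverage μ φ x, u⟫ = ⟪φ x, u⟫ := by
  have hu' (g : G) : ⟪u, φ (g • x)⟫ = ⟪φ x, u⟫ := by rw [real_inner_comm, hu]
  rw [orbitAverage, real_inner_comm, ← integral_inner hx]
  simp_rw [hu', integral_const, probReal_univ, one_smul]

variable [MeasurableMul G] [μ.IsMulLeftInvariant]

theorem inner_smul_orbitAverage
    (hunitary : ∀ (g : G) (x y : X), ⟪φ (g • x), φ (g • y)⟫ = ⟪φ x, φ y⟫) {v : X}
    (hv : Integrable (fun g => φ (g • v)) μ) (g : G) (x : X) :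
    ⟪φ (g • x), orbitAverage μ φ v⟫ = ⟪φ x, orbitAverage μ φ v⟫ := by
  have hshift : ∀ h : G, ⟪φ (g • x), φ (h • v)⟫ = ⟪φ x, φ ((g⁻¹ * h) • v)⟫ := fun h => by
    rw [← hunitary g⁻¹, inv_smul_smul, mul_smul]
  rw [orbitAverage, ← integral_inner hv, ← integral_inner hv]
  simp_rw [hshift]
  exact integral_mul_left_eq_self (fun h => ⟪φ x, φ (h • v)⟫) g⁻¹

theorem inner_smul_sum_orbitAverage {ι : Type*} [Fintype ι]
    (hunitary : ∀ (g : G) (x y : X), ⟪φ (g • x), φ (g • y)⟫ = ⟪φ x, φ y⟫)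
    (hint : ∀ x, Integrable (fun g => φ (g • x)) μ) (xs : ι → X) (c : ι → ℝ) (g : G) (x : X) :
    ⟪φ (g • x), ∑ j, c j • orbitAverage μ φ (xs j)⟫ =
      ⟪φ x, ∑ j, c j • orbitAverage μ φ (xs j)⟫ := by
  simp_rw [inner_sum, real_inner_smul_right, inner_smul_orbitAverage hunitary (hint _)]

end OrbitAverage

theorem margin_equality_general
    {E : Type*} [NormedAddCommGroup E] [InnerProductSpace ℝ E]
    {G : Type*} [Group G] [TopologicalSpace G] [IsTopologicalGroup G] [CompactSpace G]
    [MeasurableSpace G] [BorelSpace G]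
    (μ : Measure G) [IsProbabilityMeasure μ] [μ.IsMulLeftInvariant]
    (ρ : G →* (E ≃ₗᵢ[ℝ] E)) (hρ : Continuous fun p : G × E => ρ p.1 p.2)
    {H : Type*} [NormedAddCommGroup H] [InnerProductSpace ℝ H] [CompleteSpace H]
    (φ : E → H) (hφ : Continuous φ)
    (hunitary : ∀ (g : G) (x y : E), ⟪φ (ρ g x), φ (ρ g y)⟫ = ⟪φ x, φ y⟫)
    (Φ : E → H) (hΦ : ∀ x : E, Φ x = ∫ g, φ (ρ g x) ∂μ)
    (N : ℕ) (xs : Fin N → E) (c : Fin N → ℝ) (w : H) (hw : w = ∑ j, c j • Φ (xs j)) :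
    (∀ (x : E) (g : G), ⟪Φ x, w⟫ = ⟪φ (ρ g x), w⟫) ∧
    (∀ y : Fin N → ℝ, (∀ i, y i = 1 ∨ y i = -1) →
      (⨅ i : Fin N, y i * ⟪Φ (xs i), w⟫) =
        ⨅ i : Fin N, ⨅ g : G, y i * ⟪φ (ρ g (xs i)), w⟫) := by
  let _ : MulAction G E :=
    { smul g x := ρ g x
      one_smul x := show ρ 1 x = x by simp
      mul_smul g h x := show ρ (g * h) x = ρ g (ρ h x) by simp }
  have hint (x : E) : Integrable (fun g : G => φ (ρ g x)) μ :=
    (hφ.comp (hρ.comp (.prodMk continuous_id continuous_const))).integrable_of_hasCompactSupport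
      (.of_compactSpace _)
  obtain rfl : Φ = orbitAverage μ φ := funext hΦ
  have hw_inv : ∀ (g : G) (x : E), ⟪φ (ρ g x), w⟫ = ⟪φ x, w⟫ :=
    hw ▸ inner_smul_sum_orbitAverage hunitary hint xs c
  have hmargin (x : E) (g : G) : ⟪orbitAverage μ φ x, w⟫ = ⟪φ (ρ g x), w⟫ := by
    rw [hw_inv, inner_orbitAverage_left_of_forall_inner_smul_eq (hint x) (hw_inv · x)]
  refine ⟨hmargin, fun y _ => ?_⟩
  simp_rw [← hmargin, ciInf_const]

/-- Margin equality: for a unitary kernel and `w = Σ_j c_j Φ(x_j)`, one has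
`⟪Φ x, w⟫ = ⟪φ (g x), w⟫` for every `x ∈ E` and `g ∈ G`; consequently, for any labels
`y i ∈ {−1, +1}`, the minimum of `y i * ⟪Φ(xᵢ), w⟫` over `i` equals the minimum of
`y i * ⟪φ(g xᵢ), w⟫` over all `i` and all `g ∈ G`. -/
theorem margin_equality
    {E : Type*} [NormedAddCommGroup E] [InnerProductSpace ℝ E] [FiniteDimensional ℝ E]
    {G : Type*} [Group G] [TopologicalSpace G] [IsTopologicalGroup G] [CompactSpace G]
    [MeasurableSpace G] [BorelSpace G]
    (μ : Measure G) [IsProbabilityMeasure μ] [μ.IsMulLeftInvariant] [μ.IsMulRightInvariant]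
    [μ.IsInvInvariant]
    (ρ : G →* (E ≃ₗᵢ[ℝ] E)) (hρ : Continuous fun p : G × E => ρ p.1 p.2)
    {H : Type*} [NormedAddCommGroup H] [InnerProductSpace ℝ H] [CompleteSpace H]
    (φ : E → H) (hφ : Continuous φ)
    (hunitary : ∀ (g : G) (x y : E), ⟪φ (ρ g x), φ (ρ g y)⟫ = ⟪φ x, φ y⟫)
    (Φ : E → H) (hΦ : ∀ x : E, Φ x = ∫ g, φ (ρ g x) ∂μ)
    (N : ℕ) (xs : Fin N → E) (c : Fin N → ℝ) (w : H) (hw : w = ∑ j, c j • Φ (xs j)) :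
    (∀ (x : E) (g : G), ⟪Φ x, w⟫ = ⟪φ (ρ g x), w⟫) ∧
    (∀ y : Fin N → ℝ, (∀ i, y i = 1 ∨ y i = -1) →
      (⨅ i : Fin N, y i * ⟪Φ (xs i), w⟫) =
        ⨅ i : Fin N, ⨅ g : G, y i * ⟪φ (ρ g (xs i)), w⟫) :=
  margin_equality_general μ ρ hρ φ hφ hunitary Φ hΦ N xs c w hw
end

section
/- (Invariant kernel via a single orbit point) Assume the kernel k is unitary with respect to G. Then for all x, y ∈ E and every fixed g' ∈ G, k_Ψ(x,y) = ⟨φ(g'x), Φ(y)⟩; in particular k_Ψ(x,y) = ⟨φ(x), Φ(y)⟩ = ∫_G k(x, gy) dμ(g), so evaluating the invariant kernel requires observing only a single arbitrary point on the orbit of x. -/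
open MeasureTheory RealInnerProductSpace

section OrbitAverage

variable {G : Type*} [Group G] [MeasurableSpace G] [MeasurableMul G]
  (μ : Measure G) [μ.IsMulLeftInvariant]
  {E : Type*} [MulAction G E]
  {H : Type*} [NormedAddCommGroup H] [InnerProductSpace ℝ H] [CompleteSpace H]
  {φ : E → H}

/-- Unitarity moves `h` from the first argument onto the orbit of `y`, where left invariance of
`μ` absorbs it. -/
theorem inner_apply_smul_integral_eq_integral_inner
    (hunitary : ∀ (g : G) (x y : E), ⟪φ (g • x), φ (g • y)⟫ = ⟪φ x, φ y⟫)
    {y : E} (hy : Integrable (fun g => φ (g • y)) μ) (x : E) (h : G) :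
    ⟪φ (h • x), ∫ g, φ (g • y) ∂μ⟫ = ∫ g, ⟪φ x, φ (g • y)⟫ ∂μ :=
  calc ⟪φ (h • x), ∫ g, φ (g • y) ∂μ⟫
      = ∫ g, ⟪φ (h • x), φ (g • y)⟫ ∂μ := (integral_inner hy _).symm
    _ = ∫ g, ⟪φ x, φ ((h⁻¹ * g) • y)⟫ ∂μ := by
        congr 1 with g
        rw [← hunitary h⁻¹, inv_smul_smul, mul_smul]
    _ = ∫ g, ⟪φ x, φ (g • y)⟫ ∂μ :=
        integral_mul_left_eq_self (fun g => ⟪φ x, φ (g • y)⟫) h⁻¹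

theorem inner_integral_integral_eq_integral_inner [IsProbabilityMeasure μ]
    (hunitary : ∀ (g : G) (x y : E), ⟪φ (g • x), φ (g • y)⟫ = ⟪φ x, φ y⟫)
    {x y : E} (hx : Integrable (fun g => φ (g • x)) μ) (hy : Integrable (fun g => φ (g • y)) μ) :
    ⟪∫ g, φ (g • x) ∂μ, ∫ g, φ (g • y) ∂μ⟫ = ∫ g, ⟪φ x, φ (g • y)⟫ ∂μ := by
  calc ⟪∫ g, φ (g • x) ∂μ, ∫ g, φ (g • y) ∂μ⟫
      = ∫ h, ⟪φ (h • x), ∫ g, φ (g • y) ∂μ⟫ ∂μ := by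
        rw [real_inner_comm, ← integral_inner hx]
        simp only [real_inner_comm _ (∫ g, φ (g • y) ∂μ)]
    _ = ∫ g, ⟪φ x, φ (g • y)⟫ ∂μ := by
        simp only [inner_apply_smul_integral_eq_integral_inner μ hunitary hy, integral_const,
          probReal_univ, one_smul]

end OrbitAverage

theorem invariant_kernel_single_orbit_point_general
    {E : Type*} [NormedAddCommGroup E] [InnerProductSpace ℝ E]
    {G : Type*} [Group G] [TopologicalSpace G] [IsTopologicalGroup G] [CompactSpace G]
    [MeasurableSpace G] [BorelSpace G]
    (μ : Measure G) [IsProbabilityMeasure μ] [μ.IsMulLeftInvariant]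
    (ρ : G →* (E ≃ₗᵢ[ℝ] E)) (hρ : Continuous fun p : G × E => ρ p.1 p.2)
    {H : Type*} [NormedAddCommGroup H] [InnerProductSpace ℝ H] [CompleteSpace H]
    (φ : E → H) (hφ : Continuous φ)
    (hunitary : ∀ (g : G) (x y : E), ⟪φ (ρ g x), φ (ρ g y)⟫ = ⟪φ x, φ y⟫)
    (Φ : E → H) (hΦ : ∀ x : E, Φ x = ∫ g, φ (ρ g x) ∂μ)
    (kΨ : E → E → ℝ) (hkΨ : ∀ x y : E, kΨ x y = ⟪Φ x, Φ y⟫) :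
    ∀ (x y : E) (g' : G),
      kΨ x y = ⟪φ (ρ g' x), Φ y⟫ ∧
      kΨ x y = ⟪φ x, Φ y⟫ ∧
      kΨ x y = ∫ g, ⟪φ x, φ (ρ g y)⟫ ∂μ := by
  let _ : MulAction G E :=
    { smul := fun g x => ρ g x
      one_smul := fun x => show ρ 1 x = x by rw [map_one, LinearIsometryEquiv.coe_one, id]
      mul_smul := fun a b x => show ρ (a * b) x = ρ a (ρ b x) by
        rw [map_mul, LinearIsometryEquiv.coe_mul, Function.comp] }
  have horbit : ∀ z : E, Integrable (fun g : G => φ (g • z)) μ := fun z =>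
    (hφ.comp (hρ.comp (continuous_id.prodMk continuous_const))).integrable_of_hasCompactSupport
      (HasCompactSupport.of_compactSpace _)
  intro x y g'
  have hk : kΨ x y = ∫ g, ⟪φ x, φ (ρ g y)⟫ ∂μ := by
    rw [hkΨ, hΦ, hΦ]
    exact inner_integral_integral_eq_integral_inner μ hunitary (horbit x) (horbit y)
  have hpoint : ∀ h : G, ⟪φ (ρ h x), Φ y⟫ = ∫ g, ⟪φ x, φ (ρ g y)⟫ ∂μ := fun h => by
    rw [hΦ]
    exact inner_apply_smul_integral_eq_integral_inner μ hunitary (horbit y) x h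
  refine ⟨hk.trans (hpoint g').symm, hk.trans ?_, hk⟩
  simpa using (hpoint 1).symm

/-- Invariant kernel via a single orbit point: for a unitary kernel,
`k_Ψ(x,y) = ⟪Φ x, Φ y⟫` satisfies `k_Ψ(x,y) = ⟪φ(g'x), Φ y⟫` for every fixed `g' ∈ G`;
in particular `k_Ψ(x,y) = ⟪φ x, Φ y⟫ = ∫_G k(x, gy) dμ(g)`. -/
theorem invariant_kernel_single_orbit_point
    {E : Type*} [NormedAddCommGroup E] [InnerProductSpace ℝ E] [FiniteDimensional ℝ E]
    {G : Type*} [Group G] [TopologicalSpace G] [IsTopologicalGroup G] [CompactSpace G]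
    [MeasurableSpace G] [BorelSpace G]
    (μ : Measure G) [IsProbabilityMeasure μ] [μ.IsMulLeftInvariant] [μ.IsMulRightInvariant]
    [μ.IsInvInvariant]
    (ρ : G →* (E ≃ₗᵢ[ℝ] E)) (hρ : Continuous fun p : G × E => ρ p.1 p.2)
    {H : Type*} [NormedAddCommGroup H] [InnerProductSpace ℝ H] [CompleteSpace H]
    (φ : E → H) (hφ : Continuous φ)
    (hunitary : ∀ (g : G) (x y : E), ⟪φ (ρ g x), φ (ρ g y)⟫ = ⟪φ x, φ y⟫)
    (Φ : E → H) (hΦ : ∀ x : E, Φ x = ∫ g, φ (ρ g x) ∂μ)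
    (kΨ : E → E → ℝ) (hkΨ : ∀ x y : E, kΨ x y = ⟪Φ x, Φ y⟫) :
    ∀ (x y : E) (g' : G),
      kΨ x y = ⟪φ (ρ g' x), Φ y⟫ ∧
      kΨ x y = ⟪φ x, Φ y⟫ ∧
      kΨ x y = ∫ g, ⟪φ x, φ (ρ g y)⟫ ∂μ :=
  invariant_kernel_single_orbit_point_general μ ρ hρ φ hφ hunitary Φ hΦ kΨ hkΨ
end

section
/- (Invariant kernel from unlabelled templates) Assume the kernel k is unitary with respect to G. Let t_1,…,t_M ∈ E be templates and suppose x, y ∈ E satisfy φ(x) = Σ_{i=1}^M (u_x)_i φ(t_i) and φ(y) = Σ_{i=1}^M (u_y)_i φ(t_i) for coefficient vectors u_x, u_y ∈ ℝ^M. Then k_Ψ(x,y) = ∫_G ⟨ Σ_{i=1}^M (u_x)_i φ(g t_i), Σ_{j=1}^M (u_y)_j φ(t_j) ⟩ dμ(g) = Σ_{i=1}^M Σ_{j=1}^M (u_x)_i (u_y)_j ∫_G k(g t_i, t_j) dμ(g); i.e., the G-invariant kernel can be computed using only transformed versions of the unlabelled template set. -/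
/-!
Averaging over `G` and unitarity give `⟪Φ x, Φ y⟫ = ⟪Φ x, φ y⟫`: translating the inner variable
by `h` is undone by left invariance of `μ`. Unitarity also transports the linear relation
`φ x = ∑ (u_x)ᵢ φ(tᵢ)` to `φ(g x) = ∑ (u_x)ᵢ φ(g tᵢ)`, because the defect of the relation has
the same Gram data before and after applying `g`, hence zero norm.
-/

open MeasureTheory RealInnerProductSpace

section Transport

variable {X H ι : Type*} [NormedAddCommGroup H] [InnerProductSpace ℝ H] [Fintype ι]
  {φ : X → H} {ψ : X → X} {x : X} {t : ι → X} {c : ι → ℝ}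

lemma inner_sub_sum_smul_comp (hψ : ∀ a b, ⟪φ (ψ a), φ (ψ b)⟫ = ⟪φ a, φ b⟫) (z : X) :
    ⟪φ (ψ x) - ∑ i, c i • φ (ψ (t i)), φ (ψ z)⟫ = ⟪φ x - ∑ i, c i • φ (t i), φ z⟫ := by
  simp only [inner_sub_left, sum_inner, real_inner_smul_left, hψ]

lemma comp_eq_sum_smul_of_inner_comp_comp (hψ : ∀ a b, ⟪φ (ψ a), φ (ψ b)⟫ = ⟪φ a, φ b⟫)
    (hx : φ x = ∑ i, c i • φ (t i)) : φ (ψ x) = ∑ i, c i • φ (ψ (t i)) := by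
  have hv : ∀ z, ⟪φ (ψ x) - ∑ i, c i • φ (ψ (t i)), φ (ψ z)⟫ = 0 := fun z => by
    rw [inner_sub_sum_smul_comp hψ, ← hx, sub_self, inner_zero_left]
  rw [← sub_eq_zero, ← inner_self_eq_zero (𝕜 := ℝ), inner_sub_right, inner_sum]
  simp only [real_inner_smul_right, hv, mul_zero, Finset.sum_const_zero, sub_zero]

end Transport

lemma integral_inner_const {α H : Type*} [MeasurableSpace α] {μ : Measure α}
    [NormedAddCommGroup H] [InnerProductSpace ℝ H] [CompleteSpace H] {f : α → H}
    (hf : Integrable f μ) (w : H) :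
    ∫ a, ⟪f a, w⟫ ∂μ = ⟪∫ a, f a ∂μ, w⟫ := by
  simpa only [real_inner_comm w] using integral_inner hf w

lemma integral_inner_sum_smul_sum_smul {α H ι κ : Type*} [MeasurableSpace α] {μ : Measure α}
    [NormedAddCommGroup H] [InnerProductSpace ℝ H] [CompleteSpace H] [Fintype ι] [Fintype κ]
    {f : ι → α → H} (hf : ∀ i, Integrable (f i) μ) (c : ι → ℝ) (d : κ → ℝ) (v : κ → H) :
    ∫ a, ⟪∑ i, c i • f i a, ∑ j, d j • v j⟫ ∂μ =
      ∑ i, ∑ j, c i * d j * ∫ a, ⟪f i a, v j⟫ ∂μ := by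
  have hcf : ∀ i ∈ Finset.univ, Integrable (fun a => c i • f i a) μ := fun i _ => (hf i).smul (c i)
  rw [integral_inner_const (integrable_finsetSum _ hcf), integral_finsetSum _ hcf]
  simp only [integral_smul, sum_inner, inner_sum, real_inner_smul_left, real_inner_smul_right,
    ← integral_inner_const (hf _)]
  rw [Finset.sum_comm]
  simp only [mul_left_comm, mul_assoc]

section Average

variable {G X H : Type*} [Group G] [MeasurableSpace G] [MeasurableMul G] {μ : Measure G}
  [μ.IsMulLeftInvariant] [MulAction G X]
  [NormedAddCommGroup H] [InnerProductSpace ℝ H] [CompleteSpace H] {φ : X → H}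

lemma inner_integral_comp_smul_smul (hφ : ∀ (g : G) a b, ⟪φ (g • a), φ (g • b)⟫ = ⟪φ a, φ b⟫)
    {x : X} (hx : Integrable (fun g => φ (g • x)) μ) (h : G) (y : X) :
    ⟪∫ g, φ (g • x) ∂μ, φ (h • y)⟫ = ⟪∫ g, φ (g • x) ∂μ, φ y⟫ := by
  rw [← integral_inner_const hx, ← integral_inner_const hx,
    ← integral_mul_left_eq_self _ h]
  congr 1 with g
  rw [mul_smul, hφ]

lemma inner_integral_comp_smul_integral_comp_smul [IsProbabilityMeasure μ]
    (hφ : ∀ (g : G) a b, ⟪φ (g • a), φ (g • b)⟫ = ⟪φ a, φ b⟫)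
    {x y : X} (hx : Integrable (fun g => φ (g • x)) μ) (hy : Integrable (fun g => φ (g • y)) μ) :
    ⟪∫ g, φ (g • x) ∂μ, ∫ g, φ (g • y) ∂μ⟫ = ∫ g, ⟪φ (g • x), φ y⟫ ∂μ := by
  rw [← integral_inner hy]
  simp_rw [inner_integral_comp_smul_smul hφ hx]
  rw [integral_const, probReal_univ, one_smul, integral_inner_const hx]

end Average

theorem invariant_kernel_from_templates_general
    {E : Type*} [NormedAddCommGroup E] [InnerProductSpace ℝ E]
    {G : Type*} [Group G] [TopologicalSpace G] [IsTopologicalGroup G] [CompactSpace G]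
    [MeasurableSpace G] [BorelSpace G]
    (μ : Measure G) [IsProbabilityMeasure μ] [μ.IsMulLeftInvariant]
    (ρ : G →* (E ≃ₗᵢ[ℝ] E)) (hρ : Continuous fun p : G × E => ρ p.1 p.2)
    {H : Type*} [NormedAddCommGroup H] [InnerProductSpace ℝ H] [CompleteSpace H]
    (φ : E → H) (hφ : Continuous φ)
    (hunitary : ∀ (g : G) (x y : E), ⟪φ (ρ g x), φ (ρ g y)⟫ = ⟪φ x, φ y⟫)
    (Φ : E → H) (hΦ : ∀ x : E, Φ x = ∫ g, φ (ρ g x) ∂μ)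
    (kΨ : E → E → ℝ) (hkΨ : ∀ x y : E, kΨ x y = ⟪Φ x, Φ y⟫)
    (M : ℕ) (t : Fin M → E) (x y : E) (ux uy : Fin M → ℝ)
    (hx : φ x = ∑ i, ux i • φ (t i)) (hy : φ y = ∑ i, uy i • φ (t i)) :
    kΨ x y = ∫ g, ⟪∑ i, ux i • φ (ρ g (t i)), ∑ j, uy j • φ (t j)⟫ ∂μ ∧
    kΨ x y = ∑ i, ∑ j, ux i * uy j * ∫ g, ⟪φ (ρ g (t i)), φ (t j)⟫ ∂μ := by
  let _ : MulAction G E :=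
    { smul := fun g z => ρ g z
      one_smul := fun z => by simp [HSMul.hSMul]
      mul_smul := fun g h z => by simp [HSMul.hSMul] }
  have horbit : ∀ z : E, Integrable (fun g : G => φ (ρ g z)) μ := fun z =>
    (hφ.comp (hρ.comp (.prodMk_left z))).integrable_of_hasCompactSupport
      (.of_compactSpace _)
  have hΦΦ : ⟪Φ x, Φ y⟫ = ∫ g, ⟪φ (ρ g x), φ y⟫ ∂μ := by
    rw [hΦ, hΦ]
    exact inner_integral_comp_smul_integral_comp_smul (X := E) hunitary (horbit x) (horbit y)
  have hfirst : kΨ x y = ∫ g, ⟪∑ i, ux i • φ (ρ g (t i)), ∑ j, uy j • φ (t j)⟫ ∂μ := by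
    rw [hkΨ, hΦΦ, ← hy]
    congr 1 with g
    rw [comp_eq_sum_smul_of_inner_comp_comp (hunitary g) hx]
  refine ⟨hfirst, hfirst.trans ?_⟩
  exact integral_inner_sum_smul_sum_smul (fun i => horbit (t i)) ux uy _

/-- Invariant kernel from unlabelled templates: for a unitary kernel,
if `φ x = Σᵢ (u_x)ᵢ φ(tᵢ)` and `φ y = Σᵢ (u_y)ᵢ φ(tᵢ)` for templates `t₁,…,t_M`, then
`k_Ψ(x,y) = ∫_G ⟪Σᵢ (u_x)ᵢ φ(g tᵢ), Σⱼ (u_y)ⱼ φ(tⱼ)⟫ dμ(g)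
         = Σᵢ Σⱼ (u_x)ᵢ (u_y)ⱼ ∫_G k(g tᵢ, tⱼ) dμ(g)`. -/
theorem invariant_kernel_from_templates
    {E : Type*} [NormedAddCommGroup E] [InnerProductSpace ℝ E] [FiniteDimensional ℝ E]
    {G : Type*} [Group G] [TopologicalSpace G] [IsTopologicalGroup G] [CompactSpace G]
    [MeasurableSpace G] [BorelSpace G]
    (μ : Measure G) [IsProbabilityMeasure μ] [μ.IsMulLeftInvariant] [μ.IsMulRightInvariant]
    [μ.IsInvInvariant]
    (ρ : G →* (E ≃ₗᵢ[ℝ] E)) (hρ : Continuous fun p : G × E => ρ p.1 p.2)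
    {H : Type*} [NormedAddCommGroup H] [InnerProductSpace ℝ H] [CompleteSpace H]
    (φ : E → H) (hφ : Continuous φ)
    (hunitary : ∀ (g : G) (x y : E), ⟪φ (ρ g x), φ (ρ g y)⟫ = ⟪φ x, φ y⟫)
    (Φ : E → H) (hΦ : ∀ x : E, Φ x = ∫ g, φ (ρ g x) ∂μ)
    (kΨ : E → E → ℝ) (hkΨ : ∀ x y : E, kΨ x y = ⟪Φ x, Φ y⟫)
    (M : ℕ) (t : Fin M → E) (x y : E) (ux uy : Fin M → ℝ)
    (hx : φ x = ∑ i, ux i • φ (t i)) (hy : φ y = ∑ i, uy i • φ (t i)) :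
    kΨ x y = ∫ g, ⟪∑ i, ux i • φ (ρ g (t i)), ∑ j, uy j • φ (t j)⟫ ∂μ ∧
    kΨ x y = ∑ i, ∑ j, ux i * uy j * ∫ g, ⟪φ (ρ g (t i)), φ (t j)⟫ ∂μ :=
  invariant_kernel_from_templates_general μ ρ hρ φ hφ hunitary Φ hΦ kΨ hkΨ M t x y ux uy hx hy
end

section
/- (Stability) Suppose each η_n is Lipschitz continuous with constant L_{η_n}, set L_η = max_n L_{η_n}, and assume N·L_η ≤ 1/√2 and k(z, z) = 1 for all z ∈ E. Then for all x, x' ∈ E, (1/K) Σ_{k=1}^K Σ_{n=1}^N (Υ^k_n(x) − Υ^k_n(x'))² ≤ 1 − k_H(x, x') ≤ 1 − k(x, x'), where k_H(x, x') = max_{g, g' ∈ G} k(g x, g' x') is the kernel distance in the Hausdorff sense. -/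
open RealInnerProductSpace

/-- Stability: if each `η_n` is Lipschitz with constant `L_{η_n}`,
`L_η = max_n L_{η_n}` satisfies `N·L_η ≤ 1/√2`, and `k(z,z) = 1` for all `z`, then
`(1/K) Σ_k Σ_n (Υ^k_n(x) − Υ^k_n(x'))² ≤ 1 − k_H(x,x') ≤ 1 − k(x,x')`, where
`k_H(x,x') = max_{g,g' ∈ G} k(gx, g'x')` is the kernel distance in the Hausdorff sense. -/
theorem kernel_feature_stability
    {E : Type*} [NormedAddCommGroup E] [InnerProductSpace ℝ E]
    {G : Type*} [Group G] [Fintype G]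
    {H : Type*} [NormedAddCommGroup H] [InnerProductSpace ℝ H] [CompleteSpace H]
    (ρ : G →* (E ≃ₗᵢ[ℝ] E))
    (φ : E → H)
    (hunitary : ∀ (g : G) (x y : E), ⟪φ (ρ g x), φ (ρ g y)⟫ = ⟪φ x, φ y⟫)
    (K N : ℕ) (t : Fin K → E) (η : Fin N → ℝ → ℝ)
    (Υ : Fin K → Fin N → E → ℝ)
    (hΥ : ∀ (k : Fin K) (n : Fin N) (x : E),
      Υ k n x = (Fintype.card G : ℝ)⁻¹ * ∑ g : G, η n ⟪φ x, φ (ρ g (t k))⟫)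
    (L : Fin N → NNReal) (hL : ∀ n, LipschitzWith (L n) (η n))
    (Lη : NNReal) (hLη : Lη = Finset.univ.sup L)
    (hNL : (N : ℝ) * (Lη : ℝ) ≤ 1 / Real.sqrt 2)
    (hnorm : ∀ z : E, ⟪φ z, φ z⟫ = 1)
    (x x' : E) (kH : ℝ)
    (hkH : IsGreatest {r : ℝ | ∃ g g' : G, r = ⟪φ (ρ g x), φ (ρ g' x')⟫} kH) :
    (K : ℝ)⁻¹ * ∑ k, ∑ n, (Υ k n x - Υ k n x') ^ 2 ≤ 1 - kH ∧
      1 - kH ≤ 1 - ⟪φ x, φ x'⟫ := by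
  have hnormφ : ∀ z : E, ‖φ z‖ = 1 := by
    intro z
    have h := hnorm z
    rw [real_inner_self_eq_norm_sq] at h
    nlinarith [norm_nonneg (φ z)]
  obtain ⟨⟨g₀, g₀', hkHeq⟩, hub⟩ := hkH
  have hkH1 : kH ≤ 1 := by
    rw [hkHeq]
    calc ⟪φ (ρ g₀ x), φ (ρ g₀' x')⟫ ≤ ‖φ (ρ g₀ x)‖ * ‖φ (ρ g₀' x')‖ :=
          real_inner_le_norm _ _
      _ = 1 := by rw [hnormφ, hnormφ]; ring
  have hsecond : 1 - kH ≤ 1 - ⟪φ x, φ x'⟫ := by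
    have : ⟪φ x, φ x'⟫ ≤ kH := by
      apply hub
      exact ⟨1, 1, by simp⟩
    linarith
  refine ⟨?_, hsecond⟩
  -- invariance of the inner sum
  have hinv : ∀ (g : G) (z : E) (n : Fin N) (k : Fin K),
      ∑ h : G, η n ⟪φ (ρ g z), φ (ρ h (t k))⟫ = ∑ h : G, η n ⟪φ z, φ (ρ h (t k))⟫ := by
    intro g z n k
    rw [← Equiv.sum_comp (Equiv.mulLeft g) (fun h => η n ⟪φ (ρ g z), φ (ρ h (t k))⟫)]
    refine Finset.sum_congr rfl fun h _ => ?_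
    congr 1
    have h1 : ρ (g * h) (t k) = ρ g (ρ h (t k)) := by
      rw [map_mul]; rfl
    rw [Equiv.coe_mulLeft, h1, hunitary]
  set u := φ (ρ g₀ x) - φ (ρ g₀' x') with hu
  have hnormu : ‖u‖ ^ 2 = 2 * (1 - kH) := by
    have h1 := hnorm (ρ g₀ x)
    have h2 := hnorm (ρ g₀' x')
    have h3 := inner_sub_sub_self (𝕜 := ℝ) (φ (ρ g₀ x)) (φ (ρ g₀' x'))
    have h4 : ⟪φ (ρ g₀' x'), φ (ρ g₀ x)⟫ = ⟪φ (ρ g₀ x), φ (ρ g₀' x')⟫ := real_inner_comm _ _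
    rw [← real_inner_self_eq_norm_sq, hu, h3, h1, h2, h4, ← hkHeq]
    ring
  have hLn : ∀ n : Fin N, (L n : ℝ) ≤ (Lη : ℝ) := by
    intro n
    exact_mod_cast NNReal.coe_le_coe.mpr (hLη ▸ Finset.le_sup (Finset.mem_univ n))
  have hcard : (1 : ℝ) ≤ (Fintype.card G : ℝ) := by
    exact_mod_cast Fintype.card_pos
  have hcardpos : (0 : ℝ) < (Fintype.card G : ℝ) := by linarith
  have hterm : ∀ (k : Fin K) (n : Fin N), |Υ k n x - Υ k n x'| ≤ (Lη : ℝ) * ‖u‖ := by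
    intro k n
    rw [hΥ, hΥ, ← hinv g₀ x n k, ← hinv g₀' x' n k, ← mul_sub, ← Finset.sum_sub_distrib]
    rw [abs_mul]
    have hbound : ∀ h : G,
        |η n ⟪φ (ρ g₀ x), φ (ρ h (t k))⟫ - η n ⟪φ (ρ g₀' x'), φ (ρ h (t k))⟫|
          ≤ (Lη : ℝ) * ‖u‖ := by
      intro h
      have hlip : |η n ⟪φ (ρ g₀ x), φ (ρ h (t k))⟫ - η n ⟪φ (ρ g₀' x'), φ (ρ h (t k))⟫|
          ≤ (L n : ℝ) * |⟪φ (ρ g₀ x), φ (ρ h (t k))⟫ - ⟪φ (ρ g₀' x'), φ (ρ h (t k))⟫| := by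
        have := (hL n).dist_le_mul ⟪φ (ρ g₀ x), φ (ρ h (t k))⟫ ⟪φ (ρ g₀' x'), φ (ρ h (t k))⟫
        simpa [Real.dist_eq] using this
      have hcs : |⟪φ (ρ g₀ x), φ (ρ h (t k))⟫ - ⟪φ (ρ g₀' x'), φ (ρ h (t k))⟫| ≤ ‖u‖ := by
        rw [← inner_sub_left]
        calc |⟪u, φ (ρ h (t k))⟫| ≤ ‖u‖ * ‖φ (ρ h (t k))‖ := abs_real_inner_le_norm _ _
          _ = ‖u‖ := by rw [hnormφ, mul_one]
      calc |η n ⟪φ (ρ g₀ x), φ (ρ h (t k))⟫ - η n ⟪φ (ρ g₀' x'), φ (ρ h (t k))⟫|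
          ≤ (L n : ℝ) * |⟪φ (ρ g₀ x), φ (ρ h (t k))⟫ - ⟪φ (ρ g₀' x'), φ (ρ h (t k))⟫| := hlip
        _ ≤ (Lη : ℝ) * ‖u‖ := by
            apply mul_le_mul (hLn n) hcs (abs_nonneg _)
            exact NNReal.coe_nonneg Lη
    calc |(Fintype.card G : ℝ)⁻¹| * |∑ h : G, (η n ⟪φ (ρ g₀ x), φ (ρ h (t k))⟫
            - η n ⟪φ (ρ g₀' x'), φ (ρ h (t k))⟫)|
        ≤ (Fintype.card G : ℝ)⁻¹ * ∑ h : G, ((Lη : ℝ) * ‖u‖) := by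
          rw [abs_of_nonneg (by positivity : (0:ℝ) ≤ (Fintype.card G : ℝ)⁻¹)]
          apply mul_le_mul_of_nonneg_left _ (by positivity)
          exact (Finset.abs_sum_le_sum_abs _ _).trans
            (Finset.sum_le_sum fun h _ => hbound h)
      _ = (Lη : ℝ) * ‖u‖ := by
          rw [Finset.sum_const, Finset.card_univ, nsmul_eq_mul]
          field_simp
  have hsq : ∀ (k : Fin K) (n : Fin N),
      (Υ k n x - Υ k n x') ^ 2 ≤ (Lη : ℝ) ^ 2 * (2 * (1 - kH)) := by
    intro k n
    have h1 := hterm k n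
    have h2 : (Υ k n x - Υ k n x') ^ 2 ≤ ((Lη : ℝ) * ‖u‖) ^ 2 := by
      rw [← sq_abs]
      exact pow_le_pow_left₀ (abs_nonneg _) h1 2
    calc (Υ k n x - Υ k n x') ^ 2 ≤ ((Lη : ℝ) * ‖u‖) ^ 2 := h2
      _ = (Lη : ℝ) ^ 2 * ‖u‖ ^ 2 := by ring
      _ = (Lη : ℝ) ^ 2 * (2 * (1 - kH)) := by rw [hnormu]
  have hkHnn : (0 : ℝ) ≤ 1 - kH := by linarith
  have hNbound : (N : ℝ) * ((Lη : ℝ) ^ 2 * (2 * (1 - kH))) ≤ 1 - kH := by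
    rcases Nat.eq_zero_or_pos N with hN | hN
    · simp [hN]; linarith
    · have hN1 : (1 : ℝ) ≤ (N : ℝ) := by exact_mod_cast hN
      have hNLnn : (0 : ℝ) ≤ (N : ℝ) * (Lη : ℝ) := by positivity
      have hsq2 : ((N : ℝ) * (Lη : ℝ)) ^ 2 ≤ 1 / 2 := by
        have : (1 / Real.sqrt 2) ^ 2 = 1 / 2 := by
          rw [div_pow, one_pow, Real.sq_sqrt (by norm_num : (2:ℝ) ≥ 0)]
        calc ((N : ℝ) * (Lη : ℝ)) ^ 2 ≤ (1 / Real.sqrt 2) ^ 2 :=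
              pow_le_pow_left₀ hNLnn hNL 2
          _ = 1 / 2 := this
      nlinarith [NNReal.coe_nonneg Lη, sq_nonneg ((Lη : ℝ))]
  have hsum : ∀ k : Fin K, ∑ n, (Υ k n x - Υ k n x') ^ 2 ≤ 1 - kH := by
    intro k
    calc ∑ n, (Υ k n x - Υ k n x') ^ 2 ≤ ∑ _n : Fin N, (Lη : ℝ) ^ 2 * (2 * (1 - kH)) :=
          Finset.sum_le_sum fun n _ => hsq k n
      _ = (N : ℝ) * ((Lη : ℝ) ^ 2 * (2 * (1 - kH))) := by
          rw [Finset.sum_const, Finset.card_univ, Fintype.card_fin, nsmul_eq_mul]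
      _ ≤ 1 - kH := hNbound
  rcases Nat.eq_zero_or_pos K with hK | hK
  · subst hK; simpa using hkHnn
  · have hKpos : (0 : ℝ) < (K : ℝ) := by exact_mod_cast hK
    calc (K : ℝ)⁻¹ * ∑ k, ∑ n, (Υ k n x - Υ k n x') ^ 2
        ≤ (K : ℝ)⁻¹ * ∑ _k : Fin K, (1 - kH) := by
          apply mul_le_mul_of_nonneg_left _ (by positivity)
          exact Finset.sum_le_sum fun k _ => hsum k
      _ = 1 - kH := by
          rw [Finset.sum_const, Finset.card_univ, Fintype.card_fin, nsmul_eq_mul]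
          field_simp
end

section
/- (Partial invariance) Fix a template t ∈ E and suppose η_n(0) = 0 for each n. Let x ∈ E and ḡ ∈ G, and assume the support conditions { g ∈ G : ⟨φ(x), φ(g t)⟩ ≠ 0 } ⊆ G_0 and { g ∈ G : ⟨φ(ḡ x), φ(g t)⟩ ≠ 0 } ⊆ G_0. Then the partially invariant feature satisfies Υ̂_n(ḡ x) = Υ̂_n(x) for every n, where Υ̂_n(z) = (1/|G_0|) Σ_{g ∈ G_0} η_n(⟨φ(z), φ(g t)⟩). -/
open RealInnerProductSpace

/-- Partial invariance: for a unitary kernel, a template `t`, pooling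
nonlinearities with `η_n(0) = 0`, and support conditions
`{g : ⟪φ x, φ (g t)⟫ ≠ 0} ⊆ G₀` and `{g : ⟪φ (ḡ x), φ (g t)⟫ ≠ 0} ⊆ G₀`, the partially
invariant feature `Υ̂_n(z) = (1/|G₀|) Σ_{g∈G₀} η_n(⟪φ z, φ (g t)⟫)` satisfies
`Υ̂_n(ḡ x) = Υ̂_n(x)` for every `n`. -/
theorem partial_invariance
    {E : Type*} [NormedAddCommGroup E] [InnerProductSpace ℝ E]
    {G : Type*} [Group G] [Fintype G] (G₀ : Finset G)
    {H : Type*} [NormedAddCommGroup H] [InnerProductSpace ℝ H] [CompleteSpace H]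
    (ρ : G →* (E ≃ₗᵢ[ℝ] E))
    (φ : E → H)
    (hunitary : ∀ (g : G) (x y : E), ⟪φ (ρ g x), φ (ρ g y)⟫ = ⟪φ x, φ y⟫)
    (N : ℕ) (t : E) (η : Fin N → ℝ → ℝ) (hη0 : ∀ n, η n 0 = 0)
    (Υhat : Fin N → E → ℝ)
    (hΥhat : ∀ (n : Fin N) (z : E),
      Υhat n z = (G₀.card : ℝ)⁻¹ * ∑ g ∈ G₀, η n ⟪φ z, φ (ρ g t)⟫)
    (x : E) (gbar : G)
    (hsupp_x : {g : G | ⟪φ x, φ (ρ g t)⟫ ≠ 0} ⊆ ↑G₀)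
    (hsupp_gx : {g : G | ⟪φ (ρ gbar x), φ (ρ g t)⟫ ≠ 0} ⊆ ↑G₀) :
    ∀ n : Fin N, Υhat n (ρ gbar x) = Υhat n x := by
  intro n
  rw [hΥhat, hΥhat]
  congr 1
  have hext : ∀ (y : E), ({g : G | ⟪φ y, φ (ρ g t)⟫ ≠ 0} ⊆ ↑G₀) →
      ∑ g ∈ G₀, η n ⟪φ y, φ (ρ g t)⟫ = ∑ g : G, η n ⟪φ y, φ (ρ g t)⟫ := by
    intro y hy
    apply Finset.sum_subset (Finset.subset_univ G₀)
    intro g _ hg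
    have : ⟪φ y, φ (ρ g t)⟫ = 0 := by
      by_contra h
      exact hg (hy h)
    rw [this, hη0]
  rw [hext _ hsupp_gx, hext _ hsupp_x]
  rw [← Equiv.sum_comp (Equiv.mulLeft gbar)
    (fun g => η n ⟪φ (ρ gbar x), φ (ρ g t)⟫)]
  refine Finset.sum_congr rfl fun g _ => ?_
  congr 1
  have := hunitary gbar x (ρ g t)
  simp only [Equiv.coe_mulLeft, map_mul, LinearIsometryEquiv.coe_mul]
  simpa using this
end

section
/- (Stability of the partially invariant feature, singleton case) Suppose G_0 = {g₀} consists of a single element, each η_n is Lipschitz continuous with constant L_{η_n}, L_η = max_n L_{η_n} satisfies N·L_η ≤ 1/√2, k(z, z) = 1 for all z ∈ E, and each template satisfies k(t^k, t^k) = 1. Then for all x, x' ∈ E, (1/K) Σ_{k=1}^K Σ_{n=1}^N (Υ̂^k_n(x) − Υ̂^k_n(x'))² ≤ 1 − k(x, x'), where Υ̂^k_n(z) = (1/|G_0|) Σ_{g ∈ G_0} η_n(⟨φ(z), φ(g t^k)⟩). -/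
/-!
Each feature `Υ̂ᵏₙ(z)` is an average of `η_n(⟪φ z, w⟫)` over unit vectors `w`, so it moves by at
most `L_η ‖φ x - φ x'‖`, and for unit feature vectors `‖φ x - φ x'‖² = 2 (1 - k(x, x'))`.
Summing `N` squares gives `2 N L_η² (1 - k(x, x'))`, and `N L_η ≤ 1/√2` forces
`2 N L_η² ≤ 2 N² L_η² ≤ 1`.
-/

open RealInnerProductSpace Finset
open scoped BigOperators

namespace Finset

lemma expect_le_of_nonneg {ι : Type*} {s : Finset ι} {f : ι → ℝ} {a : ℝ} (ha : 0 ≤ a)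
    (h : ∀ i ∈ s, f i ≤ a) : 𝔼 i ∈ s, f i ≤ a := by
  rcases s.eq_empty_or_nonempty with rfl | hs
  · simpa using ha
  · exact expect_le hs h

lemma sum_sq_le_half_sq_of_abs_le {ι : Type*} {s : Finset ι} {d : ι → ℝ} {L r : ℝ}
    (hL : 2 * s.card * L ^ 2 ≤ 1) (hd : ∀ i ∈ s, |d i| ≤ L * r) :
    ∑ i ∈ s, d i ^ 2 ≤ r ^ 2 / 2 :=
  calc ∑ i ∈ s, d i ^ 2 ≤ ∑ _i ∈ s, (L * r) ^ 2 :=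
        sum_le_sum fun i hi => sq_le_sq.mpr ((hd i hi).trans (le_abs_self _))
    _ = (2 * s.card * L ^ 2) * (r ^ 2 / 2) := by rw [sum_const, nsmul_eq_mul]; ring
    _ ≤ r ^ 2 / 2 := mul_le_of_le_one_left (by positivity) hL

end Finset

lemma two_mul_mul_sq_le_one_of_mul_le_inv_sqrt_two (N : ℕ) {L : ℝ} (hL : 0 ≤ L)
    (h : N * L ≤ 1 / √2) : 2 * N * L ^ 2 ≤ 1 := by
  have hsq : (N * L) ^ 2 ≤ 1 / 2 := by
    simpa [div_pow] using pow_le_pow_left₀ (by positivity) h 2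
  have hN : (N : ℝ) ≤ N ^ 2 := by exact_mod_cast Nat.le_self_pow two_ne_zero N
  nlinarith [sq_nonneg L]

section InnerProductSpace

variable {H : Type*} [NormedAddCommGroup H] [InnerProductSpace ℝ H]

lemma norm_sub_sq_eq_of_inner_self_eq_one {u v : H} (hu : ⟪u, u⟫ = 1) (hv : ⟪v, v⟫ = 1) :
    ‖u - v‖ ^ 2 = 2 * (1 - ⟪u, v⟫) := by
  rw [norm_sub_sq_real, ← real_inner_self_eq_norm_sq, ← real_inner_self_eq_norm_sq, hu, hv]
  ring

lemma LipschitzWith.abs_sub_comp_inner_le {f : ℝ → ℝ} {L : NNReal} (hf : LipschitzWith L f)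
    {w : H} (hw : ‖w‖ ≤ 1) (u v : H) : |f ⟪u, w⟫ - f ⟪v, w⟫| ≤ L * ‖u - v‖ :=
  calc |f ⟪u, w⟫ - f ⟪v, w⟫| ≤ L * |⟪u, w⟫ - ⟪v, w⟫| := by
        simpa only [Real.dist_eq] using hf.dist_le_mul ⟪u, w⟫ ⟪v, w⟫
    _ = L * |⟪u - v, w⟫| := by rw [inner_sub_left]
    _ ≤ L * ‖u - v‖ := by
        gcongr
        exact (abs_real_inner_le_norm _ _).trans (mul_le_of_le_one_right (norm_nonneg _) hw)

lemma LipschitzWith.abs_expect_sub_expect_comp_inner_le {ι : Type*} {s : Finset ι}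
    {f : ℝ → ℝ} {L : NNReal} (hf : LipschitzWith L f) {w : ι → H} (hw : ∀ i ∈ s, ‖w i‖ ≤ 1)
    (u v : H) : |𝔼 i ∈ s, f ⟪u, w i⟫ - 𝔼 i ∈ s, f ⟪v, w i⟫| ≤ L * ‖u - v‖ := by
  rw [← expect_sub_distrib]
  exact (abs_expect_le _ _).trans <| expect_le_of_nonneg (by positivity)
    fun i hi => hf.abs_sub_comp_inner_le (hw i hi) u v

end InnerProductSpace

theorem partial_feature_stability_singleton_general
    {E : Type*} [NormedAddCommGroup E] [InnerProductSpace ℝ E]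
    {G : Type*} [Group G] (G₀ : Finset G)
    {H : Type*} [NormedAddCommGroup H] [InnerProductSpace ℝ H]
    (ρ : G →* (E ≃ₗᵢ[ℝ] E))
    (φ : E → H)
    (K N : ℕ) (t : Fin K → E) (η : Fin N → ℝ → ℝ)
    (Υhat : Fin K → Fin N → E → ℝ)
    (hΥhat : ∀ (k : Fin K) (n : Fin N) (z : E),
      Υhat k n z = (G₀.card : ℝ)⁻¹ * ∑ g ∈ G₀, η n ⟪φ z, φ (ρ g (t k))⟫)
    (L : Fin N → NNReal) (hL : ∀ n, LipschitzWith (L n) (η n))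
    (Lη : NNReal) (hLη : Lη = Finset.univ.sup L)
    (hNL : (N : ℝ) * (Lη : ℝ) ≤ 1 / Real.sqrt 2)
    (hnorm : ∀ z : E, ⟪φ z, φ z⟫ = 1) :
    ∀ x x' : E,
      (K : ℝ)⁻¹ * ∑ k, ∑ n, (Υhat k n x - Υhat k n x') ^ 2 ≤ 1 - ⟪φ x, φ x'⟫ := by
  intro x x'
  have hunit : ∀ z, ‖φ z‖ ≤ 1 := fun z =>
    (sq_le_one_iff₀ (norm_nonneg _)).mp (by rw [← real_inner_self_eq_norm_sq, hnorm])
  have hLip : ∀ n, LipschitzWith Lη (η n) := fun n =>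
    (hL n).weaken (hLη ▸ le_sup (mem_univ n))
  have hfeature : ∀ k n, |Υhat k n x - Υhat k n x'| ≤ Lη * ‖φ x - φ x'‖ := fun k n => by
    simp only [hΥhat, inv_mul_eq_div, ← expect_eq_sum_div_card]
    exact (hLip n).abs_expect_sub_expect_comp_inner_le (fun g _ => hunit _) _ _
  have hdist := norm_sub_sq_eq_of_inner_self_eq_one (hnorm x) (hnorm x')
  have hNL' := two_mul_mul_sq_le_one_of_mul_le_inv_sqrt_two N Lη.coe_nonneg hNL
  have hsum : ∀ k, ∑ n, (Υhat k n x - Υhat k n x') ^ 2 ≤ 1 - ⟪φ x, φ x'⟫ := fun k => by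
    have := sum_sq_le_half_sq_of_abs_le (s := univ) (by simpa using hNL') fun n _ => hfeature k n
    rwa [hdist, mul_div_cancel_left₀ _ two_ne_zero] at this
  have hc : 0 ≤ 1 - ⟪φ x, φ x'⟫ := by nlinarith [sq_nonneg ‖φ x - φ x'‖]
  simpa only [inv_mul_eq_div, Fintype.expect_eq_sum_div_card, Fintype.card_fin] using
    expect_le_of_nonneg (s := univ) hc fun k _ => hsum k

/-- Stability of the partially invariant feature, singleton case: if
`G₀ = {g₀}`, each `η_n` is Lipschitz with constant `L_{η_n}`, `L_η = max_n L_{η_n}`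
satisfies `N·L_η ≤ 1/√2`, `k(z,z) = 1` for all `z`, and each template satisfies
`k(t^k, t^k) = 1`, then `(1/K) Σ_k Σ_n (Υ̂^k_n(x) − Υ̂^k_n(x'))² ≤ 1 − k(x,x')`. -/
theorem partial_feature_stability_singleton
    {E : Type*} [NormedAddCommGroup E] [InnerProductSpace ℝ E]
    {G : Type*} [Group G] [Fintype G] (G₀ : Finset G)
    {H : Type*} [NormedAddCommGroup H] [InnerProductSpace ℝ H] [CompleteSpace H]
    (ρ : G →* (E ≃ₗᵢ[ℝ] E))
    (φ : E → H)
    (hunitary : ∀ (g : G) (x y : E), ⟪φ (ρ g x), φ (ρ g y)⟫ = ⟪φ x, φ y⟫)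
    (K N : ℕ) (t : Fin K → E) (η : Fin N → ℝ → ℝ)
    (Υhat : Fin K → Fin N → E → ℝ)
    (hΥhat : ∀ (k : Fin K) (n : Fin N) (z : E),
      Υhat k n z = (G₀.card : ℝ)⁻¹ * ∑ g ∈ G₀, η n ⟪φ z, φ (ρ g (t k))⟫)
    (g₀ : G) (hG₀ : G₀ = {g₀})
    (L : Fin N → NNReal) (hL : ∀ n, LipschitzWith (L n) (η n))
    (Lη : NNReal) (hLη : Lη = Finset.univ.sup L)
    (hNL : (N : ℝ) * (Lη : ℝ) ≤ 1 / Real.sqrt 2)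
    (hnorm : ∀ z : E, ⟪φ z, φ z⟫ = 1)
    (htk : ∀ k : Fin K, ⟪φ (t k), φ (t k)⟫ = 1) :
    ∀ x x' : E,
      (K : ℝ)⁻¹ * ∑ k, ∑ n, (Υhat k n x - Υhat k n x') ^ 2 ≤ 1 - ⟪φ x, φ x'⟫ :=
  partial_feature_stability_singleton_general G₀ ρ φ K N t η Υhat hΥhat L hL Lη hLη hNL hnorm
end

section
/- (Stability of the partially invariant feature, general case) Suppose |G_0| ≥ 1, each η_n is Lipschitz continuous with constant L_{η_n}, L_η = max_n L_{η_n} satisfies N·L_η ≤ 1/√2, η_n(0) = 0 for each n, k(z, z) = 1 for all z ∈ E, and each template satisfies k(t^k, t^k) = 1. Fix x, x' ∈ E and assume the support conditions hold for all transformed versions of x and x': for every g ∈ G, every z ∈ {x, x'} and every template t^k, { h ∈ G : ⟨φ(g z), φ(h t^k)⟩ ≠ 0 } ⊆ G_0 (so that by partial invariance Υ̂(g z) = Υ̂(z) for all g ∈ G). Then (1/K) Σ_{k=1}^K Σ_{n=1}^N (Υ̂^k_n(x) − Υ̂^k_n(x'))² ≤ 1 − k_H(x, x'), where k_H(x, x')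 = max_{g, g' ∈ G_0} k(g x, g' x') is the kernel distance in the Hausdorff sense over G_0. -/
open RealInnerProductSpace

/-- Stability of the partially invariant feature, general case: if
`|G₀| ≥ 1`, each `η_n` is Lipschitz with constant `L_{η_n}`, `L_η = max_n L_{η_n}`
satisfies `N·L_η ≤ 1/√2`, `η_n(0) = 0`, `k(z,z) = 1` for all `z`, each template has
`k(t^k,t^k) = 1`, and the support conditions hold for all transformed versions of `x`
and `x'`, then `(1/K) Σ_k Σ_n (Υ̂^k_n(x) − Υ̂^k_n(x'))² ≤ 1 − k_H(x,x')`, where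
`k_H(x,x') = max_{g,g' ∈ G₀} k(gx, g'x')`. -/
theorem partial_feature_stability_general
    {E : Type*} [NormedAddCommGroup E] [InnerProductSpace ℝ E]
    {G : Type*} [Group G] [Fintype G] (G₀ : Finset G)
    {H : Type*} [NormedAddCommGroup H] [InnerProductSpace ℝ H] [CompleteSpace H]
    (ρ : G →* (E ≃ₗᵢ[ℝ] E))
    (φ : E → H)
    (hunitary : ∀ (g : G) (x y : E), ⟪φ (ρ g x), φ (ρ g y)⟫ = ⟪φ x, φ y⟫)
    (K N : ℕ) (t : Fin K → E) (η : Fin N → ℝ → ℝ)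
    (Υhat : Fin K → Fin N → E → ℝ)
    (hΥhat : ∀ (k : Fin K) (n : Fin N) (z : E),
      Υhat k n z = (G₀.card : ℝ)⁻¹ * ∑ g ∈ G₀, η n ⟪φ z, φ (ρ g (t k))⟫)
    (hG₀ : 1 ≤ G₀.card)
    (L : Fin N → NNReal) (hL : ∀ n, LipschitzWith (L n) (η n))
    (Lη : NNReal) (hLη : Lη = Finset.univ.sup L)
    (hNL : (N : ℝ) * (Lη : ℝ) ≤ 1 / Real.sqrt 2)
    (hη0 : ∀ n, η n 0 = 0)
    (hnorm : ∀ z : E, ⟪φ z, φ z⟫ = 1)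
    (htk : ∀ k : Fin K, ⟪φ (t k), φ (t k)⟫ = 1)
    (x x' : E)
    (hsupp : ∀ (g : G), ∀ z ∈ ({x, x'} : Set E), ∀ k : Fin K,
      {h : G | ⟪φ (ρ g z), φ (ρ h (t k))⟫ ≠ 0} ⊆ ↑G₀)
    (kH : ℝ)
    (hkH : IsGreatest
      {r : ℝ | ∃ g ∈ G₀, ∃ g' ∈ G₀, r = ⟪φ (ρ g x), φ (ρ g' x')⟫} kH) :
    (K : ℝ)⁻¹ * ∑ k, ∑ n, (Υhat k n x - Υhat k n x') ^ 2 ≤ 1 - kH := by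

  obtain ⟨⟨g₁, hg₁, g₂, hg₂, hkHeq⟩, hub⟩ := hkH
  set a := φ (ρ g₁ x) with ha
  set b := φ (ρ g₂ x') with hb
  have hnorm1 : ∀ z : E, ‖φ z‖ = 1 := by
    intro z
    have h := hnorm z
    rw [real_inner_self_eq_norm_sq] at h
    nlinarith [norm_nonneg (φ z)]
  have hkH1 : kH ≤ 1 := by
    rw [hkHeq]
    calc ⟪a, b⟫ ≤ ‖a‖ * ‖b‖ := real_inner_le_norm a b
    _ = 1 := by rw [hnorm1, hnorm1]; ring
  have hd2 : ‖a - b‖ ^ 2 = 2 - 2 * kH := by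
    rw [norm_sub_sq_real, hnorm1, hnorm1, hkHeq]; ring
  have hcpos : (0:ℝ) < (G₀.card : ℝ) := by exact_mod_cast hG₀
  -- invariance of Υhat under the group action
  have hinv : ∀ (g : G), ∀ z ∈ ({x, x'} : Set E), ∀ (k : Fin K) (n : Fin N),
      Υhat k n (ρ g z) = Υhat k n z := by
    intro g z hz k n
    rw [hΥhat, hΥhat]
    congr 1
    have hcomp : ∀ (g h : G) (v : E), ρ g (ρ h v) = ρ (g * h) v := by
      intro g h v
      rw [map_mul]
      rfl
    have h1 : ∑ h ∈ G₀, η n ⟪φ (ρ g z), φ (ρ h (t k))⟫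
        = ∑ h : G, η n ⟪φ (ρ g z), φ (ρ h (t k))⟫ := by
      apply Finset.sum_subset (Finset.subset_univ _)
      intro h _ hh
      have hz0 : ⟪φ (ρ g z), φ (ρ h (t k))⟫ = 0 := by
        by_contra hne
        exact hh (hsupp g z hz k hne)
      rw [hz0, hη0]
    have h2 : ∑ h ∈ G₀, η n ⟪φ z, φ (ρ h (t k))⟫
        = ∑ h : G, η n ⟪φ z, φ (ρ h (t k))⟫ := by
      apply Finset.sum_subset (Finset.subset_univ _)
      intro h _ hh
      have hz0 : ⟪φ z, φ (ρ h (t k))⟫ = 0 := by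
        by_contra hne
        have hs := hsupp 1 z hz k
        simp only [map_one, LinearIsometryEquiv.coe_one, id_eq] at hs
        exact hh (hs hne)
      rw [hz0, hη0]
    rw [h1, h2]
    refine Fintype.sum_equiv (Equiv.mulLeft g⁻¹) _ _ ?_
    intro h
    refine congrArg (η n) ?_
    show ⟪φ (ρ g z), φ (ρ h (t k))⟫ = ⟪φ z, φ (ρ (g⁻¹ * h) (t k))⟫
    have hu := hunitary g⁻¹ (ρ g z) (ρ h (t k))
    rw [← hu, hcomp g⁻¹ g z, inv_mul_cancel, hcomp g⁻¹ h (t k)]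
    simp
  -- pointwise bound on the difference
  have hdiff : ∀ (k : Fin K) (n : Fin N),
      |Υhat k n x - Υhat k n x'| ≤ (L n : ℝ) * ‖a - b‖ := by
    intro k n
    have hx := hinv g₁ x (by simp) k n
    have hx' := hinv g₂ x' (by simp) k n
    rw [← hx, ← hx', hΥhat, hΥhat, ← mul_sub, ← Finset.sum_sub_distrib]
    have hterm : ∀ g ∈ G₀,
        |η n ⟪a, φ (ρ g (t k))⟫ - η n ⟪b, φ (ρ g (t k))⟫|
          ≤ (L n : ℝ) * ‖a - b‖ := by
      intro g _
      have h1 := (hL n).dist_le_mul ⟪a, φ (ρ g (t k))⟫ ⟪b, φ (ρ g (t k))⟫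
      rw [Real.dist_eq, Real.dist_eq] at h1
      have h2 : |⟪a, φ (ρ g (t k))⟫ - ⟪b, φ (ρ g (t k))⟫| ≤ ‖a - b‖ := by
        rw [← inner_sub_left]
        calc |⟪a - b, φ (ρ g (t k))⟫| ≤ ‖a - b‖ * ‖φ (ρ g (t k))‖ :=
              abs_real_inner_le_norm _ _
          _ = ‖a - b‖ := by rw [hnorm1, mul_one]
      calc |η n ⟪a, φ (ρ g (t k))⟫ - η n ⟪b, φ (ρ g (t k))⟫|
          ≤ (L n : ℝ) * |⟪a, φ (ρ g (t k))⟫ - ⟪b, φ (ρ g (t k))⟫| := h1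
        _ ≤ (L n : ℝ) * ‖a - b‖ := by
            exact mul_le_mul_of_nonneg_left h2 (L n).2
    have hsum : |∑ g ∈ G₀, (η n ⟪a, φ (ρ g (t k))⟫ - η n ⟪b, φ (ρ g (t k))⟫)|
        ≤ (G₀.card : ℝ) * ((L n : ℝ) * ‖a - b‖) := by
      calc |∑ g ∈ G₀, (η n ⟪a, φ (ρ g (t k))⟫ - η n ⟪b, φ (ρ g (t k))⟫)|
          ≤ ∑ g ∈ G₀, |η n ⟪a, φ (ρ g (t k))⟫ - η n ⟪b, φ (ρ g (t k))⟫| :=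
            Finset.abs_sum_le_sum_abs _ _
        _ ≤ ∑ _g ∈ G₀, (L n : ℝ) * ‖a - b‖ := Finset.sum_le_sum hterm
        _ = (G₀.card : ℝ) * ((L n : ℝ) * ‖a - b‖) := by
            rw [Finset.sum_const, nsmul_eq_mul]
    rw [abs_mul, abs_inv, Nat.abs_cast]
    calc (G₀.card : ℝ)⁻¹ * |∑ g ∈ G₀, (η n ⟪a, φ (ρ g (t k))⟫ - η n ⟪b, φ (ρ g (t k))⟫)|
        ≤ (G₀.card : ℝ)⁻¹ * ((G₀.card : ℝ) * ((L n : ℝ) * ‖a - b‖)) := by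
          exact mul_le_mul_of_nonneg_left hsum (by positivity)
      _ = (L n : ℝ) * ‖a - b‖ := by field_simp
  have hLn : ∀ n : Fin N, (L n : ℝ) ≤ (Lη : ℝ) := by
    intro n
    rw [hLη]
    exact_mod_cast Finset.le_sup (Finset.mem_univ n)
  -- bound for a single k
  have hk1 : ∀ k : Fin K, ∑ n, (Υhat k n x - Υhat k n x') ^ 2 ≤ 1 - kH := by
    intro k
    have hbound : ∀ n : Fin N, (Υhat k n x - Υhat k n x') ^ 2
        ≤ (Lη : ℝ)^2 * (2 - 2 * kH) := by
      intro n
      have h1 := hdiff k n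
      have h2 : (Υhat k n x - Υhat k n x') ^ 2 ≤ ((L n : ℝ) * ‖a - b‖)^2 := by
        rw [← sq_abs]
        exact pow_le_pow_left₀ (abs_nonneg _) h1 2
      have h3 : ((L n : ℝ) * ‖a - b‖)^2 ≤ (Lη : ℝ)^2 * (2 - 2 * kH) := by
        rw [mul_pow, hd2]
        have : (L n : ℝ)^2 ≤ (Lη : ℝ)^2 := by
          exact pow_le_pow_left₀ (L n).2 (hLn n) 2
        nlinarith [hd2, sq_nonneg (‖a - b‖), (L n).2]
      linarith
    have hsumn : ∑ n, (Υhat k n x - Υhat k n x') ^ 2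
        ≤ (N : ℝ) * ((Lη : ℝ)^2 * (2 - 2 * kH)) := by
      calc ∑ n, (Υhat k n x - Υhat k n x') ^ 2
          ≤ ∑ _n : Fin N, (Lη : ℝ)^2 * (2 - 2 * kH) :=
            Finset.sum_le_sum fun n _ => hbound n
        _ = (N : ℝ) * ((Lη : ℝ)^2 * (2 - 2 * kH)) := by
            rw [Finset.sum_const, Finset.card_univ, Fintype.card_fin, nsmul_eq_mul]
    have hfactor : (N : ℝ) * ((Lη : ℝ)^2 * (2 - 2 * kH)) ≤ 1 - kH := by
      have hs2 : Real.sqrt 2 ^ 2 = 2 := Real.sq_sqrt (by norm_num)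
      have hspos : (0:ℝ) < Real.sqrt 2 := Real.sqrt_pos.mpr (by norm_num)
      have h2NL : 2 * (N : ℝ) * (Lη : ℝ)^2 ≤ 1 := by
        rcases Nat.eq_zero_or_pos N with hN | hN
        · simp [hN]
        · have hN1 : (1:ℝ) ≤ (N:ℝ) := by exact_mod_cast hN
          have h0 : (1:ℝ) * (Lη:ℝ) ≤ (N:ℝ) * (Lη:ℝ) :=
            mul_le_mul_of_nonneg_right hN1 Lη.2
          have hLle : (Lη : ℝ) ≤ 1 / Real.sqrt 2 := by linarith
          have hm : (N:ℝ) * (Lη:ℝ) * (Lη:ℝ) ≤ (1 / Real.sqrt 2) * (1 / Real.sqrt 2) :=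
            mul_le_mul hNL hLle Lη.2 (by positivity)
          have hss : (1 / Real.sqrt 2) * (1 / Real.sqrt 2) = 1 / 2 := by
            rw [div_mul_div_comm, one_mul,
              show Real.sqrt 2 * Real.sqrt 2 = 2 from by nlinarith [hs2]]
          rw [hss] at hm
          nlinarith [hm]
      nlinarith [Lη.2, sq_nonneg (Lη : ℝ)]
    linarith
  -- assemble
  rcases Nat.eq_zero_or_pos K with hK | hK
  · subst hK
    simp
    linarith
  · have hKpos : (0:ℝ) < (K:ℝ) := by exact_mod_cast hK
    have hsumk : ∑ k, ∑ n, (Υhat k n x - Υhat k n x') ^ 2 ≤ (K : ℝ) * (1 - kH) := by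
      calc ∑ k, ∑ n, (Υhat k n x - Υhat k n x') ^ 2
          ≤ ∑ _k : Fin K, (1 - kH) := Finset.sum_le_sum fun k _ => hk1 k
        _ = (K : ℝ) * (1 - kH) := by
            rw [Finset.sum_const, Finset.card_univ, Fintype.card_fin, nsmul_eq_mul]
    calc (K : ℝ)⁻¹ * ∑ k, ∑ n, (Υhat k n x - Υhat k n x') ^ 2
        ≤ (K : ℝ)⁻¹ * ((K : ℝ) * (1 - kH)) :=
          mul_le_mul_of_nonneg_left hsumk (by positivity)
      _ = 1 - kH := by field_simp
end
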